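/- arXiv:cs/0605118 — 4 statements merged into one kernel-verified Lean document; each statement's English description precedes it below -/
import Mathlib

section
/- For a pseudocodeword matrix F representing an actual q-ary codeword c (i.e., each row i of F has exactly one entry equal to 1, in column c_i, and all other entries 0), the q-ary symmetric channel weight w_qSC(F) equals the Hamming weight of c. Precisely, if w is the number of rows i with c_i ≠ 0, then the smallest e such that the sum of e largest entries of F' (the matrix F with its 0-th column deleted, choosing at most one entry per row) is at least the sum of (1 - f_{i,0}) over the remaining rows is e = ⌈w/2⌉, and when w is even the two sides are equal so w_qSC(F) = 2e = w. -/
open Finset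

/-- A selection of `e` entries of `F'` (one per row, nonzero columns) whose sum
dominates the sum of `1 - f_{i,0}` over the remaining rows. -/
def Sel (n q : ℕ) [NeZero q] (F : Fin n → Fin q → ℝ) (e : ℕ) : Prop :=
  ∃ K : Finset (Fin n), K.card = e ∧ ∃ j : Fin n → Fin q,
    (∀ i ∈ K, j i ≠ 0) ∧
    (∑ i ∈ Kᶜ, (1 - F i 0)) ≤ ∑ i ∈ K, F i (j i)

theorem stmt0 (n q : ℕ) [NeZero q] (hq : 2 ≤ q) (hn : 1 ≤ n)
    (c : Fin n → Fin q)
    (F : Fin n → Fin q → ℝ)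
    (hF : ∀ i j, F i j = if c i = j then (1 : ℝ) else 0)
    (w : ℕ) (hw : w = (Finset.univ.filter fun i => c i ≠ 0).card) :
    IsLeast {e | Sel n q F e} ((w + 1) / 2) ∧
    (Even w →
      2 * ((w + 1) / 2) = w ∧
      ∃ K : Finset (Fin n), K.card = (w + 1) / 2 ∧ ∃ j : Fin n → Fin q,
        (∀ i ∈ K, j i ≠ 0) ∧
        (∑ i ∈ Kᶜ, (1 - F i 0)) = ∑ i ∈ K, F i (j i)) := by
  classical
  set S : Finset (Fin n) := Finset.univ.filter (fun i => c i ≠ 0) with hS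
  have hwS : w = S.card := hw
  have hwn : w ≤ n := by
    rw [hwS]
    simpa using (card_le_card (S.subset_univ)).trans_eq (by simp)
  -- the default nonzero column
  have hq1 : ((⟨1, hq⟩ : Fin q) : Fin q) ≠ 0 := by
    simp [Fin.ext_iff, Fin.val_zero]
  set j : Fin n → Fin q := fun i => if c i = 0 then ⟨1, hq⟩ else c i with hj
  have hjne : ∀ i, j i ≠ 0 := by
    intro i
    by_cases h : c i = 0 <;> simp [hj, h, hq1]
  have hFnn : ∀ i k, 0 ≤ F i k := by
    intro i k; rw [hF]; split <;> norm_num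
  -- sum of (1 - F i 0) over T equals card of T ∩ S
  have hsum1 : ∀ T : Finset (Fin n),
      ∑ i ∈ T, (1 - F i 0) = ((T ∩ S).card : ℝ) := by
    intro T
    have : ∀ i ∈ T, (1 - F i 0) = if c i ≠ 0 then (1:ℝ) else 0 := by
      intro i _
      rw [hF]
      by_cases h : c i = 0 <;> simp [h]
    rw [Finset.sum_congr rfl this, ← Finset.sum_filter, Finset.sum_const,
      nsmul_eq_mul, mul_one]
    congr 2
    ext i
    simp [hS, mem_filter, mem_inter, and_comm]
  -- for K ⊆ S, sum of F i (j i) over K equals card K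
  have hsum2 : ∀ K : Finset (Fin n), K ⊆ S →
      ∑ i ∈ K, F i (j i) = (K.card : ℝ) := by
    intro K hK
    have : ∀ i ∈ K, F i (j i) = 1 := by
      intro i hi
      have hci : c i ≠ 0 := by
        have := hK hi; simpa [hS] using this
      rw [hF]
      simp [hj, hci]
    rw [Finset.sum_congr rfl this, Finset.sum_const, nsmul_eq_mul, mul_one]
  constructor
  · constructor
    · -- membership: Sel n q F ((w+1)/2)
      set e := (w + 1) / 2 with he
      set m := min e w with hm
      obtain ⟨A, hAS, hAcard⟩ := Finset.exists_subset_card_eq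
        (show m ≤ S.card by omega)
      obtain ⟨K, hAK, _, hKcard⟩ := Finset.exists_subsuperset_card_eq
        (A.subset_univ) (show A.card ≤ e by omega)
        (show e ≤ (Finset.univ : Finset (Fin n)).card by
          rw [card_univ, Fintype.card_fin]; omega)
      refine ⟨K, hKcard, j, fun i _ => hjne i, ?_⟩
      rw [hsum1]
      have h1 : (Kᶜ ∩ S).card + (K ∩ S).card = w := by
        rw [hwS,
          show Kᶜ ∩ S = S \ K by ext i; simp [mem_sdiff, mem_compl, and_comm],
          show K ∩ S = S ∩ K from inter_comm K S]
        exact Finset.card_sdiff_add_card_inter S K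
      have h2 : m ≤ (K ∩ S).card := by
        rw [← hAcard]
        exact card_le_card (fun i hi => mem_inter.mpr ⟨hAK hi, hAS hi⟩)
      have h3 : (Kᶜ ∩ S).card ≤ m := by omega
      calc ((Kᶜ ∩ S).card : ℝ) ≤ (m : ℝ) := by exact_mod_cast h3
        _ = ∑ i ∈ A, F i (j i) := by rw [hsum2 A hAS, hAcard]
        _ ≤ ∑ i ∈ K, F i (j i) :=
            Finset.sum_le_sum_of_subset_of_nonneg hAK (fun i _ _ => hFnn i _)
    · -- lower bound
      rintro e ⟨K, hKcard, j', hj', hle⟩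
      have h1 : ∑ i ∈ K, F i (j' i) ≤ ((K ∩ S).card : ℝ) := by
        have : ∀ i ∈ K, F i (j' i) ≤ if c i ≠ 0 then (1:ℝ) else 0 := by
          intro i hi
          rw [hF]
          by_cases h : c i = 0
          · simp [h, (hj' i hi).symm]
          · rw [if_pos h]
            split <;> norm_num
        calc ∑ i ∈ K, F i (j' i) ≤ ∑ i ∈ K, if c i ≠ 0 then (1:ℝ) else 0 :=
              Finset.sum_le_sum this
          _ = ((K ∩ S).card : ℝ) := by
              rw [← Finset.sum_filter, Finset.sum_const, nsmul_eq_mul, mul_one]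
              congr 2
              ext i; simp [hS, mem_filter, mem_inter, and_comm]
      rw [hsum1] at hle
      have h2 : (Kᶜ ∩ S).card ≤ (K ∩ S).card := by
        exact_mod_cast hle.trans h1
      have h3 : (Kᶜ ∩ S).card + (K ∩ S).card = w := by
        rw [hwS,
          show Kᶜ ∩ S = S \ K by ext i; simp [mem_sdiff, mem_compl, and_comm],
          show K ∩ S = S ∩ K from inter_comm K S]
        exact Finset.card_sdiff_add_card_inter S K
      have h4 : (K ∩ S).card ≤ e := hKcard ▸ card_le_card inter_subset_left
      exact Nat.le_of_lt_succ (by omega)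
  · -- even case
    intro hev
    obtain ⟨t, ht⟩ := hev
    have h2e : 2 * ((w + 1) / 2) = w := by omega
    refine ⟨h2e, ?_⟩
    have : (w + 1) / 2 ≤ S.card := by omega
    obtain ⟨K, hKS, hKcard⟩ := Finset.exists_subset_card_eq this
    refine ⟨K, hKcard, j, fun i _ => hjne i, ?_⟩
    rw [hsum1, hsum2 K hKS]
    have h3 : (Kᶜ ∩ S).card + (K ∩ S).card = w := by
      rw [hwS,
        show Kᶜ ∩ S = S \ K by ext i; simp [mem_sdiff, mem_compl, and_comm],
        show K ∩ S = S ∩ K from inter_comm K S]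
      exact Finset.card_sdiff_add_card_inter S K
    have h4 : (K ∩ S).card = (w + 1) / 2 := by
      rw [← hKcard]; congr 1; exact inter_eq_left.mpr hKS
    have : (Kᶜ ∩ S).card = K.card := by omega
    rw [this]
end

section
/- Lower bound on q-PAM AWGN pseudoweight by the BSC-type quantity: for any n × q matrix F with nonnegative entries and rows summing to 1, with f_{0,0} < 1 and not all rows i having Σ_{m≥1} f_{i,m} m = 0, and assuming 1 - f_{0,0} = max_i (1 - f_{i,0}), the quantity w(F) = (Σ_i Σ_m f_{i,m} m^2)^2 / (Σ_i (Σ_m f_{i,m} m)^2) satisfies w(F) ≥ (Σ_{i=0}^{n-1} (1 - f_{i,0})) / (1 - f_{0,0}). -/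
theorem stmt3 (n q : ℕ) [NeZero n] [NeZero q]
    (F : Fin n → Fin q → ℝ)
    (hnonneg : ∀ i m, 0 ≤ F i m)
    (hrow : ∀ i, ∑ m, F i m = 1)
    (hf00 : F 0 0 < 1)
    (hden : ∃ i, (∑ m, F i m * (m : ℝ)) ≠ 0)
    (hmax : ∀ i, 1 - F i 0 ≤ 1 - F 0 0) :
    (∑ i, ∑ m, F i m * (m : ℝ) ^ 2) ^ 2 / (∑ i, (∑ m, F i m * (m : ℝ)) ^ 2) ≥
      (∑ i, (1 - F i 0)) / (1 - F 0 0) := by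
  set S := ∑ i, ∑ m, F i m * (m : ℝ) ^ 2 with hS
  set D := ∑ i, (∑ m, F i m * (m : ℝ)) ^ 2 with hD
  set T := ∑ i, (1 - F i 0) with hT
  have hSi_nonneg : ∀ i, 0 ≤ ∑ m, F i m * (m : ℝ) ^ 2 := by
    intro i; apply Finset.sum_nonneg; intro m _; exact mul_nonneg (hnonneg i m) (by positivity)
  -- indicator sum
  have hind : ∀ i, (∑ m, F i m * (if m = (0 : Fin q) then (0:ℝ) else 1)) = 1 - F i 0 := by
    intro i
    have : ∀ m : Fin q, F i m * (if m = (0 : Fin q) then (0:ℝ) else 1)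
        = F i m - (if m = (0 : Fin q) then F i m else 0) := by
      intro m; by_cases h : m = 0 <;> simp [h]
    rw [Finset.sum_congr rfl (fun m _ => this m), Finset.sum_sub_distrib, hrow,
      Finset.sum_ite_eq' Finset.univ (0 : Fin q) (F i)]
    simp
  -- 1 - F i 0 ≥ 0
  have h1mf : ∀ i, 0 ≤ 1 - F i 0 := by
    intro i
    rw [← hind i]
    apply Finset.sum_nonneg; intro m _
    by_cases h : m = 0 <;> simp [h, hnonneg i m]
  -- row Cauchy-Schwarz
  have hrowCS : ∀ i, (∑ m, F i m * (m : ℝ)) ^ 2 ≤ (1 - F i 0) * ∑ m, F i m * (m : ℝ) ^ 2 := by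
    intro i
    have key := Finset.sum_mul_sq_le_sq_mul_sq Finset.univ
      (fun m : Fin q => Real.sqrt (F i m) * (if m = (0 : Fin q) then (0:ℝ) else 1))
      (fun m : Fin q => Real.sqrt (F i m) * (m : ℝ))
    have e1 : ∀ m : Fin q, (Real.sqrt (F i m) * (if m = (0 : Fin q) then (0:ℝ) else 1)) *
        (Real.sqrt (F i m) * (m : ℝ)) = F i m * (m : ℝ) := by
      intro m
      by_cases h : m = 0
      · simp [h]
      · have : Real.sqrt (F i m) * Real.sqrt (F i m) = F i m :=
          Real.mul_self_sqrt (hnonneg i m)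
        simp [h]; ring_nf; rw [mul_comm]; nlinarith [this]
    have e2 : ∀ m : Fin q, (Real.sqrt (F i m) * (if m = (0 : Fin q) then (0:ℝ) else 1)) ^ 2
        = F i m * (if m = (0 : Fin q) then (0:ℝ) else 1) := by
      intro m
      have : Real.sqrt (F i m) ^ 2 = F i m := Real.sq_sqrt (hnonneg i m)
      by_cases h : m = 0 <;> simp [h, mul_pow, this]
    have e3 : ∀ m : Fin q, (Real.sqrt (F i m) * (m : ℝ)) ^ 2 = F i m * (m : ℝ) ^ 2 := by
      intro m
      have : Real.sqrt (F i m) ^ 2 = F i m := Real.sq_sqrt (hnonneg i m)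
      rw [mul_pow, this]
    rw [Finset.sum_congr rfl (fun m _ => e1 m), Finset.sum_congr rfl (fun m _ => e2 m),
      Finset.sum_congr rfl (fun m _ => e3 m), hind i] at key
    exact key
  have h00 : 0 < 1 - F 0 0 := by linarith
  -- D ≤ (1 - F 0 0) * S
  have hDS : D ≤ (1 - F 0 0) * S := by
    rw [hD, hS, Finset.mul_sum]
    apply Finset.sum_le_sum
    intro i _
    calc (∑ m, F i m * (m : ℝ)) ^ 2 ≤ (1 - F i 0) * ∑ m, F i m * (m : ℝ) ^ 2 := hrowCS i
      _ ≤ (1 - F 0 0) * ∑ m, F i m * (m : ℝ) ^ 2 :=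
        mul_le_mul_of_nonneg_right (hmax i) (hSi_nonneg i)
  -- T ≤ S
  have hTS : T ≤ S := by
    rw [hT, hS]
    apply Finset.sum_le_sum
    intro i _
    rw [← hind i]
    apply Finset.sum_le_sum
    intro m _
    apply mul_le_mul_of_nonneg_left _ (hnonneg i m)
    by_cases h : m = 0
    · simp [h]
    · have : (1 : ℝ) ≤ (m : ℝ) := by
        have : (1 : ℕ) ≤ (m : ℕ) := Nat.one_le_iff_ne_zero.mpr (fun hh => h (Fin.ext ?_))
        · exact_mod_cast this
        · simpa using hh
      simp only [h, if_false]
      nlinarith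
  have hT0 : 0 ≤ T := Finset.sum_nonneg (fun i _ => h1mf i)
  have hD0 : 0 < D := by
    obtain ⟨i, hi⟩ := hden
    have : (0:ℝ) < (∑ m, F i m * (m : ℝ)) ^ 2 := by positivity
    calc (0:ℝ) < (∑ m, F i m * (m : ℝ)) ^ 2 := this
      _ ≤ D := Finset.single_le_sum (f := fun j => (∑ m, F j m * (m : ℝ)) ^ 2) (fun j _ => sq_nonneg _) (Finset.mem_univ i)
  have hS0 : 0 ≤ S := Finset.sum_nonneg (fun i _ => hSi_nonneg i)
  rw [ge_iff_le, div_le_div_iff₀ h00 hD0]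
  calc T * D ≤ S * ((1 - F 0 0) * S) := mul_le_mul hTS hDS (le_of_lt hD0) hS0
    _ = S ^ 2 * (1 - F 0 0) := by ring
end

section
/- Minimum distance tree bound for q-ary codes (g/2 odd): let C be a code over an alphabet A with distinguished zero, defined by parity checks on a bipartite d-left-regular Tanner graph G of girth g with all edge weights such that a nonzero symbol times an edge weight is nonzero, where g/2 is odd. Then every nonzero codeword c ∈ C has Hamming weight at least 1 + d + d(d-1) + ... + d(d-1)^{(g-6)/4}. -/
open SimpleGraph Walk Finset

section Aux

variable {α : Type*}

private lemma aux_dist_le_of_mem_support {Γ : SimpleGraph α} [DecidableEq α] {x y u : α}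
    (p : Γ.Walk x y) (hu : u ∈ p.support) : Γ.dist x u ≤ p.length :=
  le_trans (SimpleGraph.dist_le (p.takeUntil u hu)) (Walk.length_takeUntil_le p hu)

private lemma aux_endpoint {Γ : SimpleGraph α} [DecidableEq α] {x y u : α}
    {p : Γ.Walk x y} (hlen : p.length = Γ.dist x y) (hu : u ∈ p.support)
    (hd : Γ.dist x u = Γ.dist x y) : u = y := by
  have h1 : Γ.dist x u ≤ (p.takeUntil u hu).length := SimpleGraph.dist_le _
  have h2 : (p.takeUntil u hu).length + (p.dropUntil u hu).length = p.length := by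
    rw [← Walk.length_append, Walk.take_spec]
  have h3 : (p.dropUntil u hu).length = 0 := by omega
  exact Walk.eq_of_length_eq_zero h3

private lemma aux_append_isPath {Γ : SimpleGraph α} {u v w : α}
    {p : Γ.Walk u v} {q : Γ.Walk v w} (hp : p.IsPath) (hq : q.IsPath)
    (hint : ∀ t ∈ p.support, t ∈ q.support → t = v) : (p.append q).IsPath := by
  rw [Walk.isPath_def, Walk.support_append, List.nodup_append]
  refine ⟨hp.support_nodup, ?_, ?_⟩
  · exact (List.tail_sublist _).nodup hq.support_nodup
  · intro t ht t' ht' htt'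
    subst htt'
    have htq : t ∈ q.support := List.mem_of_mem_tail ht'
    have : t = v := hint t ht htq
    subst this
    have hnd := hq.support_nodup
    rw [Walk.support_eq_cons] at hnd
    exact (List.nodup_cons.mp hnd).1 ht'

private lemma aux_concat_isPath {Γ : SimpleGraph α} {u v z : α}
    {p : Γ.Walk u v} (hp : p.IsPath) (h : Γ.Adj v z) (hz : z ∉ p.support) :
    (p.concat h).IsPath := by
  rw [Walk.concat_eq_append]
  refine aux_append_isPath hp ?_ ?_
  · simp [Walk.isPath_def, h.ne]
  · intro t ht ht'
    simp only [Walk.support_cons, Walk.support_nil, List.mem_cons,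
      List.not_mem_nil, or_false, List.mem_singleton] at ht'
    rcases ht' with rfl | rfl
    · rfl
    · exact absurd ht hz

private lemma aux_firstMeet {Γ : SimpleGraph α} {u y x : α}
    (p : Γ.Walk u y) (q : Γ.Walk x y) (hp : p.IsPath) :
    ∃ (z : α) (p1 : Γ.Walk u z), p1.IsPath ∧ p1.length ≤ p.length ∧
      (∀ t ∈ p1.support, t ∈ p.support) ∧ ∃ hz : z ∈ q.support,
      (∀ t ∈ p1.support, t ∈ q.support → t = z) := by
  induction p with
  | nil =>
      exact ⟨_, Walk.nil, by simp, by simp, by simp,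
        Walk.end_mem_support q, by simp⟩
  | @cons a b' y' h p ih =>
      by_cases hu : a ∈ q.support
      · exact ⟨a, Walk.nil, by simp, by simp, by simp, hu, by simp⟩
      · obtain ⟨hp', hus⟩ := (Walk.cons_isPath_iff _ _).mp hp
        obtain ⟨z, p1, h1, h2, h3, h4, h5⟩ := ih q hp'
        refine ⟨z, Walk.cons h p1, ?_, ?_, ?_, h4, ?_⟩
        · exact (Walk.cons_isPath_iff _ _).mpr ⟨h1, fun hm => hus (h3 a hm)⟩
        · simp only [Walk.length_cons]; omega
        · intro t ht
          simp only [Walk.support_cons, List.mem_cons] at ht ⊢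
          rcases ht with rfl | ht
          · exact Or.inl rfl
          · exact Or.inr (h3 t ht)
        · intro t ht htq
          simp only [Walk.support_cons, List.mem_cons] at ht
          rcases ht with rfl | ht
          · exact absurd htq hu
          · exact h5 t ht htq

private lemma aux_two_paths {Γ : SimpleGraph α} [DecidableEq α] :
    ∀ (n : ℕ) {x y : α} (p q : Γ.Walk x y), p.IsPath → q.IsPath → p ≠ q →
      p.length + q.length ≤ n →
      ∃ (z : α) (r : Γ.Walk z z), r.IsCycle ∧ r.length ≤ p.length + q.length := by
  intro n
  induction n with
  | zero =>
      intro x y p q hp hq hne hlen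
      cases p with
      | nil => exact absurd (Walk.isPath_iff_eq_nil.mp hq).symm hne
      | cons h p' => simp at hlen
  | succ n ih =>
      intro x y p q hp hq hne hlen
      cases p with
      | nil => exact absurd (Walk.isPath_iff_eq_nil.mp hq).symm hne
      | cons h p' =>
        cases q with
        | nil =>
            exact absurd (Walk.isPath_iff_eq_nil.mp hp) (by simp)
        | cons h2 q' =>
            rename_i a b
            obtain ⟨hp', hxp'⟩ := (Walk.cons_isPath_iff _ _).mp hp
            obtain ⟨hq', hxq'⟩ := (Walk.cons_isPath_iff _ _).mp hq
            by_cases hab : a = b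
            · subst hab
              have hne' : p' ≠ q' := by
                intro he; exact hne (by rw [he])
              obtain ⟨z, r, hr, hrlen⟩ := ih p' q' hp' hq' hne' (by
                simp only [Walk.length_cons] at hlen; omega)
              exact ⟨z, r, hr, by simp only [Walk.length_cons]; omega⟩
            · obtain ⟨z, p1, hp1, hlen1, hsub1, hzq, hmeet⟩ :=
                aux_firstMeet p' (Walk.cons h2 q') hp'
              set q1 := (Walk.cons h2 q').takeUntil z hzq with hq1def
              have hq1 : q1.IsPath := hq.takeUntil hzq
              have hq1len : q1.length ≤ (Walk.cons h2 q').length :=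
                Walk.length_takeUntil_le _ hzq
              have hw : (p1.append q1.reverse).IsPath := by
                refine aux_append_isPath hp1 hq1.reverse ?_
                intro t ht ht'
                rw [Walk.support_reverse, List.mem_reverse] at ht'
                exact hmeet t ht ((Walk.support_takeUntil_subset _ hzq) ht')
              have hedge : s(x, a) ∉ (p1.append q1.reverse).edges := by
                rw [Walk.edges_append, List.mem_append]
                rintro (he | he)
                · exact hxp' (hsub1 x (Walk.fst_mem_support_of_mem_edges _ he))
                · rw [Walk.edges_reverse, List.mem_reverse] at he
                  have hq2 := Walk.edges_takeUntil_subset _ hzq he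
                  rw [Walk.edges_cons] at hq2
                  rcases List.mem_cons.mp hq2 with hq2 | hq2
                  · exact hab (Sym2.congr_right.mp hq2)
                  · exact hxq' (Walk.fst_mem_support_of_mem_edges _ hq2)
              refine ⟨x, Walk.cons h (p1.append q1.reverse),
                (Walk.cons_isCycle_iff _ _).mpr ⟨hw, hedge⟩, ?_⟩
              simp only [Walk.length_cons, Walk.length_append, Walk.length_reverse] at *
              omega

private lemma aux_parity {V W : Type} (G : SimpleGraph (V ⊕ W))
    (hbipV : ∀ v v' : V, ¬ G.Adj (Sum.inl v) (Sum.inl v'))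
    (hbipW : ∀ w w' : W, ¬ G.Adj (Sum.inr w) (Sum.inr w')) :
    ∀ {x y : V ⊕ W} (p : G.Walk x y), Even p.length ↔ (x.isLeft = y.isLeft) := by
  intro x y p
  induction p with
  | nil => simp
  | cons h p ih =>
      rename_i u v w
      have hne : u.isLeft ≠ v.isLeft := by
        cases u with
        | inl a =>
          cases v with
          | inl b => exact absurd h (hbipV a b)
          | inr b => simp
        | inr a =>
          cases v with
          | inl b => simp
          | inr b => exact absurd h (hbipW a b)
      rw [Walk.length_cons, Nat.even_add_one, ih]
      cases hb1 : u.isLeft <;> cases hb2 : v.isLeft <;> cases hb3 : w.isLeft <;>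
        simp_all

end Aux

theorem stmt8 {V W : Type} [Fintype V] [Fintype W] [DecidableEq V] [DecidableEq W]
    (G : SimpleGraph (V ⊕ W)) [DecidableRel G.Adj]
    (hbipV : ∀ v v' : V, ¬ G.Adj (Sum.inl v) (Sum.inl v'))
    (hbipW : ∀ w w' : W, ¬ G.Adj (Sum.inr w) (Sum.inr w'))
    (d g : ℕ) (hgirth : G.girth = (g : ℕ∞)) (hg : g % 4 = 2)
    (hdeg : ∀ v : V, d ≤ G.degree (Sum.inl v))
    (A : Type) [CommRing A] [DecidableEq A]
    (ω : V → W → A)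
    (hω : ∀ v w (x : A), x ≠ 0 → ω v w * x ≠ 0)
    (c : V → A)
    (hcode : ∀ w : W,
      ∑ v ∈ Finset.univ.filter (fun v => G.Adj (Sum.inl v) (Sum.inr w)), ω v w * c v = 0)
    (hc : c ≠ 0) :
    1 + ∑ k ∈ Finset.range ((g - 6) / 4 + 1), d * (d - 1) ^ k ≤
      (Finset.univ.filter fun v => c v ≠ 0).card := by
  classical
  obtain ⟨v0, hv0⟩ : ∃ v, c v ≠ 0 := by
    by_contra hno
    push_neg at hno
    exact hc (funext fun v => hno v)
  -- girth facts
  have hgn : G.girth = g := by exact_mod_cast hgirth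
  have hnac : ¬ G.IsAcyclic := by
    intro hac
    rw [hac.girth_eq_zero] at hgn
    omega
  have hge3 : 3 ≤ g := hgn ▸ SimpleGraph.three_le_girth hnac
  have hge6 : 6 ≤ g := by omega
  set m : ℕ := (g - 2) / 4 with hmdef
  have hm : g = 4 * m + 2 := by omega
  have hm1 : 1 ≤ m := by omega
  have hcyc_ge : ∀ (z : V ⊕ W) (r : G.Walk z z), r.IsCycle → g ≤ r.length := by
    intro z r hr
    have h1 : G.egirth ≤ (r.length : ℕ∞) := le_egirth.mp le_rfl z r hr
    have h2 : G.egirth ≠ ⊤ := fun h => hnac (egirth_eq_top.mp h)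
    have h3 : ((G.girth : ℕ) : ℕ∞) = G.egirth := ENat.coe_toNat h2
    rw [← h3, hgn] at h1
    exact_mod_cast h1
  have hKey : ∀ {x y : V ⊕ W} (p q : G.Walk x y), p.IsPath → q.IsPath → p ≠ q →
      g ≤ p.length + q.length := by
    intro x y p q hp hq hne
    obtain ⟨z, r, hr, hrlen⟩ := aux_two_paths (p.length + q.length) p q hp hq hne le_rfl
    exact le_trans (hcyc_ge z r hr) hrlen
  -- parity
  have hparV : ∀ v : V, G.Reachable (Sum.inl v0) (Sum.inl v) →
      G.dist (Sum.inl v0) (Sum.inl v) % 2 = 0 := by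
    intro v hr
    obtain ⟨p, hlen⟩ := hr.exists_walk_length_eq_dist
    have : Even p.length := (aux_parity G hbipV hbipW p).mpr rfl
    rw [Nat.even_iff] at this
    omega
  have hparW : ∀ w : W, G.Reachable (Sum.inl v0) (Sum.inr w) →
      G.dist (Sum.inl v0) (Sum.inr w) % 2 = 1 := by
    intro w hr
    obtain ⟨p, hlen⟩ := hr.exists_walk_length_eq_dist
    have : ¬ Even p.length := fun he => by
      simpa using (aux_parity G hbipV hbipW p).mp he
    rw [Nat.even_iff] at this
    omega
  -- no two short: two distinct "parents" at distance n of a vertex at distance n+1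
  have hnts : ∀ (n : ℕ) (a b y : V ⊕ W), 2*n + 2 < g → a ≠ b →
      G.Adj a y → G.Adj b y → G.Reachable (Sum.inl v0) a → G.Reachable (Sum.inl v0) b →
      G.dist (Sum.inl v0) a = n → G.dist (Sum.inl v0) b = n →
      G.dist (Sum.inl v0) y = n + 1 → False := by
    intro n a b y hlt hab haj hbj hra hrb hda hdb hdy
    obtain ⟨pa, hpa, hpalen⟩ := hra.exists_path_of_dist
    obtain ⟨pb, hpb, hpblen⟩ := hrb.exists_path_of_dist
    have hy_a : y ∉ pa.support := fun hy => by
      have := aux_dist_le_of_mem_support pa hy; omega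
    have hy_b : y ∉ pb.support := fun hy => by
      have := aux_dist_le_of_mem_support pb hy; omega
    have hP := aux_concat_isPath hpa haj hy_a
    have hQ := aux_concat_isPath hpb hbj hy_b
    have hne : pa.concat haj ≠ pb.concat hbj := by
      intro he
      have hmem : a ∈ (pb.concat hbj).support := by
        rw [← he, Walk.support_concat]
        simp [Walk.end_mem_support]
      rw [Walk.support_concat, List.mem_append] at hmem
      rcases hmem with hmem | hmem
      · exact hab (aux_endpoint hpblen hmem (by rw [hda, hdb]))
      · simp only [List.mem_singleton] at hmem
        exact haj.ne hmem
    have := hKey _ _ hP hQ hne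
    rw [Walk.length_concat, Walk.length_concat] at this
    omega
  -- another nonzero neighbor of a check
  have hother : ∀ (v : V) (w : W), G.Adj (Sum.inl v) (Sum.inr w) → c v ≠ 0 →
      ∃ v' : V, v' ≠ v ∧ G.Adj (Sum.inl v') (Sum.inr w) ∧ c v' ≠ 0 := by
    intro v w hadj hcv
    by_contra hno
    push_neg at hno
    have hsum := hcode w
    rw [Finset.sum_eq_single_of_mem v (by simp [hadj])] at hsum
    · exact hω v w (c v) hcv hsum
    · intro b hb hbv
      have hcb : c b = 0 := hno b hbv (by simpa using hb)
      simp [hcb]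
  -- level sets
  set L : ℕ → Finset V := fun i => Finset.univ.filter (fun v => c v ≠ 0 ∧
      G.Reachable (Sum.inl v0) (Sum.inl v) ∧ G.dist (Sum.inl v0) (Sum.inl v) = 2*i)
    with hLdef
  have hmemL : ∀ i v, v ∈ L i ↔ (c v ≠ 0 ∧
      G.Reachable (Sum.inl v0) (Sum.inl v) ∧ G.dist (Sum.inl v0) (Sum.inl v) = 2*i) := by
    intro i v
    rw [hLdef]
    simp
  set CW : V → ℕ → Finset W := fun v i => Finset.univ.filter (fun w =>
      G.Adj (Sum.inl v) (Sum.inr w) ∧ G.dist (Sum.inl v0) (Sum.inr w) = 2*i+1)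
    with hCWdef
  have hmemCW : ∀ v i w, w ∈ CW v i ↔ (G.Adj (Sum.inl v) (Sum.inr w) ∧
      G.dist (Sum.inl v0) (Sum.inr w) = 2*i+1) := by
    intro v i w
    rw [hCWdef]
    simp
  have hL0mem : v0 ∈ L 0 := by
    rw [hmemL]
    exact ⟨hv0, Reachable.refl _, by simp [SimpleGraph.dist_self]⟩
  -- neighbor count
  have hneighcard : ∀ v : V, d ≤ (Finset.univ.filter
      fun w => G.Adj (Sum.inl v) (Sum.inr w)).card := by
    intro v
    have himg : G.neighborFinset (Sum.inl v) = (Finset.univ.filter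
        fun w => G.Adj (Sum.inl v) (Sum.inr w)).image Sum.inr := by
      ext s
      rcases s with v' | w'
      · simp [SimpleGraph.mem_neighborFinset, hbipV v v']
      · simp [SimpleGraph.mem_neighborFinset]
    have := hdeg v
    rw [← SimpleGraph.card_neighborFinset_eq_degree, himg,
      Finset.card_image_of_injective _ Sum.inr_injective] at this
    exact this
  -- dichotomy for neighbors of a level-i vertex
  have hdich : ∀ i v w, v ∈ L i → G.Adj (Sum.inl v) (Sum.inr w) →
      (G.Reachable (Sum.inl v0) (Sum.inr w) ∧
        (G.dist (Sum.inl v0) (Sum.inr w) = 2*i+1 ∨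
         (1 ≤ i ∧ G.dist (Sum.inl v0) (Sum.inr w) + 1 = 2*i))) := by
    intro i v w hv hadj
    obtain ⟨hcv, hrv, hdv⟩ := (hmemL i v).mp hv
    have hrw : G.Reachable (Sum.inl v0) (Sum.inr w) := hrv.trans hadj.reachable
    obtain ⟨pv, hpv, hpvlen⟩ := hrv.exists_path_of_dist
    have hub : G.dist (Sum.inl v0) (Sum.inr w) ≤ 2*i + 1 := by
      have := SimpleGraph.dist_le (pv.concat hadj)
      rw [Walk.length_concat] at this
      omega
    obtain ⟨pw, hpwlen⟩ := hrw.exists_walk_length_eq_dist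
    have hlb : G.dist (Sum.inl v0) (Sum.inl v) ≤ G.dist (Sum.inl v0) (Sum.inr w) + 1 := by
      have := SimpleGraph.dist_le (pw.concat hadj.symm)
      rw [Walk.length_concat] at this
      omega
    have hpw := hparW w hrw
    exact ⟨hrw, by omega⟩
  -- at level ≥ 1, at most one neighbor is a parent check
  have hCWcard : ∀ i v, 1 ≤ i → i + 1 ≤ m → v ∈ L i → d - 1 ≤ (CW v i).card := by
    intro i v hi him hv
    obtain ⟨hcv, hrv, hdv⟩ := (hmemL i v).mp hv
    set P : Finset W := Finset.univ.filter (fun w => G.Adj (Sum.inl v) (Sum.inr w) ∧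
        G.dist (Sum.inl v0) (Sum.inr w) + 1 = 2*i) with hPdef
    have hsub : (Finset.univ.filter fun w => G.Adj (Sum.inl v) (Sum.inr w)) ⊆
        CW v i ∪ P := by
      intro w hw
      simp only [Finset.mem_filter, Finset.mem_univ, true_and] at hw
      obtain ⟨hrw, hcases⟩ := hdich i v w hv hw
      rcases hcases with hcase | hcase
      · exact Finset.mem_union_left _ ((hmemCW v i w).mpr ⟨hw, hcase⟩)
      · refine Finset.mem_union_right _ ?_
        rw [hPdef]
        simp only [Finset.mem_filter, Finset.mem_univ, true_and]
        exact ⟨hw, hcase.2⟩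
    have hPcard : P.card ≤ 1 := by
      rw [Finset.card_le_one]
      intro a ha b hb
      by_contra hne
      simp only [hPdef, Finset.mem_filter, Finset.mem_univ, true_and] at ha hb
      have hra : G.Reachable (Sum.inl v0) (Sum.inr a) :=
        Reachable.of_dist_ne_zero (by omega)
      have hrb : G.Reachable (Sum.inl v0) (Sum.inr b) :=
        Reachable.of_dist_ne_zero (by omega)
      exact hnts (2*i - 1) (Sum.inr a) (Sum.inr b) (Sum.inl v)
        (by omega) (fun hh => hne (Sum.inr.inj hh)) ha.1.symm hb.1.symm hra hrb
        (by omega) (by omega) (by omega)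
    have h1 := hneighcard v
    have h2 := Finset.card_le_card hsub
    have h3 := Finset.card_union_le (CW v i) P
    omega
  have hCW0 : d ≤ (CW v0 0).card := by
    refine le_trans (hneighcard v0) (Finset.card_le_card ?_)
    intro w hw
    simp only [Finset.mem_filter, Finset.mem_univ, true_and] at hw
    obtain ⟨hrw, hcases⟩ := hdich 0 v0 w hL0mem hw
    rcases hcases with hcase | hcase
    · exact (hmemCW v0 0 w).mpr ⟨hw, hcase⟩
    · omega
  -- a nonzero vertex adjacent to a child check, other than the parent, is at level i+1
  have hchilddist : ∀ i, i + 1 ≤ m → ∀ (v v' : V) (w : W), v ∈ L i →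
      G.dist (Sum.inl v0) (Sum.inr w) = 2*i+1 →
      G.Adj (Sum.inl v) (Sum.inr w) → G.Adj (Sum.inl v') (Sum.inr w) →
      v' ≠ v → c v' ≠ 0 → v' ∈ L (i+1) := by
    intro i him v v' w hv hdw hadj hadj' hne hcv'
    obtain ⟨hcv, hrv, hdv⟩ := (hmemL i v).mp hv
    have hrw : G.Reachable (Sum.inl v0) (Sum.inr w) :=
      Reachable.of_dist_ne_zero (by omega)
    have hrv' : G.Reachable (Sum.inl v0) (Sum.inl v') := hrw.trans hadj'.symm.reachable
    obtain ⟨pw, hpwlen⟩ := hrw.exists_walk_length_eq_dist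
    have hub : G.dist (Sum.inl v0) (Sum.inl v') ≤ 2*i + 2 := by
      have := SimpleGraph.dist_le (pw.concat hadj'.symm)
      rw [Walk.length_concat] at this
      omega
    obtain ⟨pv', hpv'len⟩ := hrv'.exists_walk_length_eq_dist
    have hlb : G.dist (Sum.inl v0) (Sum.inr w) ≤ G.dist (Sum.inl v0) (Sum.inl v') + 1 := by
      have := SimpleGraph.dist_le (pv'.concat hadj')
      rw [Walk.length_concat] at this
      omega
    have hpar' := hparV v' hrv'
    have hcases : G.dist (Sum.inl v0) (Sum.inl v') = 2*i ∨
        G.dist (Sum.inl v0) (Sum.inl v') = 2*i + 2 := by omega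
    rcases hcases with hcase | hcase
    · exact absurd (hnts (2*i) (Sum.inl v) (Sum.inl v') (Sum.inr w) (by omega)
        (fun hh => hne (Sum.inl.inj hh).symm) hadj hadj' hrv hrv' hdv hcase hdw) id
    · rw [hmemL]
      exact ⟨hcv', hrv', by omega⟩
  -- the child-choice map
  set φ : V × W → V := fun p =>
    if h : ∃ v', v' ≠ p.1 ∧ G.Adj (Sum.inl v') (Sum.inr p.2) ∧ c v' ≠ 0 then h.choose
    else v0
    with hφdef
  set K : ℕ → Finset (V × W) := fun i =>
    (L i).biUnion (fun v => (CW v i).image (fun w => (v, w))) with hKdef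
  have hmemK : ∀ i (p : V × W), p ∈ K i ↔ (p.1 ∈ L i ∧ p.2 ∈ CW p.1 i) := by
    intro i p
    obtain ⟨a, b⟩ := p
    rw [hKdef]
    simp only [Finset.mem_biUnion, Finset.mem_image]
    constructor
    · rintro ⟨v, hv, w, hw, heq⟩
      cases heq
      exact ⟨hv, hw⟩
    · rintro ⟨ha, hb⟩
      exact ⟨a, ha, b, hb, rfl⟩
  have hφspec : ∀ i, i + 1 ≤ m → ∀ p ∈ K i, φ p ∈ L (i+1) ∧ φ p ≠ p.1 ∧
      G.Adj (Sum.inl (φ p)) (Sum.inr p.2) ∧ c (φ p) ≠ 0 := by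
    intro i him p hp
    obtain ⟨hp1, hp2⟩ := (hmemK i p).mp hp
    obtain ⟨hadj, hdw⟩ := (hmemCW p.1 i p.2).mp hp2
    obtain ⟨hcv, _, _⟩ := (hmemL i p.1).mp hp1
    have hex : ∃ v', v' ≠ p.1 ∧ G.Adj (Sum.inl v') (Sum.inr p.2) ∧ c v' ≠ 0 :=
      hother p.1 p.2 hadj hcv
    have hφeq : φ p = hex.choose := by rw [hφdef]; simp [dif_pos hex]
    obtain ⟨hne', hadj', hc'⟩ := hex.choose_spec
    rw [hφeq]
    exact ⟨hchilddist i him p.1 hex.choose p.2 hp1 hdw hadj hadj' hne' hc', hne', hadj', hc'⟩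
  have hKcard_le : ∀ i, i + 1 ≤ m → (K i).card ≤ (L (i+1)).card := by
    intro i him
    apply Finset.card_le_card_of_injOn φ (fun p hp => (hφspec i him p hp).1)
    intro p hp q hq hpq
    obtain ⟨hpL, hpne, hpadj, hpc⟩ := hφspec i him p hp
    obtain ⟨hqL, hqne, hqadj, hqc⟩ := hφspec i him q hq
    obtain ⟨hp1, hp2⟩ := (hmemK i p).mp hp
    obtain ⟨hq1, hq2⟩ := (hmemK i q).mp hq
    obtain ⟨hpadj2, hpdw⟩ := (hmemCW p.1 i p.2).mp hp2
    obtain ⟨hqadj2, hqdw⟩ := (hmemCW q.1 i q.2).mp hq2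
    obtain ⟨_, hrp1, hdp1⟩ := (hmemL i p.1).mp hp1
    obtain ⟨_, hrq1, hdq1⟩ := (hmemL i q.1).mp hq1
    by_contra hne
    by_cases h22 : p.2 = q.2
    · have h11 : p.1 ≠ q.1 := fun h => hne (Prod.ext h h22)
      exact hnts (2*i) (Sum.inl p.1) (Sum.inl q.1) (Sum.inr p.2) (by omega)
        (fun hh => h11 (Sum.inl.inj hh)) hpadj2 (h22 ▸ hqadj2) hrp1 hrq1 hdp1 hdq1 hpdw
    · obtain ⟨_, _, hdφ⟩ := (hmemL (i+1) (φ p)).mp hpL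
      have hrw1 : G.Reachable (Sum.inl v0) (Sum.inr p.2) :=
        Reachable.of_dist_ne_zero (by omega)
      have hrw2 : G.Reachable (Sum.inl v0) (Sum.inr q.2) :=
        Reachable.of_dist_ne_zero (by omega)
      exact hnts (2*i+1) (Sum.inr p.2) (Sum.inr q.2) (Sum.inl (φ p)) (by omega)
        (fun hh => h22 (Sum.inr.inj hh)) hpadj.symm (hpq ▸ hqadj.symm) hrw1 hrw2
        hpdw hqdw (by omega)
  have hK0 : d ≤ (K 0).card := by
    have hsub : (CW v0 0).image (fun w => (v0, w)) ⊆ K 0 := by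
      intro p hp
      simp only [Finset.mem_image] at hp
      obtain ⟨w, hw, rfl⟩ := hp
      exact (hmemK 0 (v0, w)).mpr ⟨hL0mem, hw⟩
    have hcard := Finset.card_le_card hsub
    rw [Finset.card_image_of_injective _ (fun a b hab => by simpa using hab)] at hcard
    exact le_trans hCW0 hcard
  have hKi : ∀ i, 1 ≤ i → i + 1 ≤ m → (d - 1) * (L i).card ≤ (K i).card := by
    intro i hi him
    rw [hKdef]
    rw [Finset.card_biUnion]
    · calc (d - 1) * (L i).card = ∑ _v ∈ L i, (d-1) := by
            rw [Finset.sum_const, smul_eq_mul, mul_comm]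
        _ ≤ ∑ v ∈ L i, ((CW v i).image (fun w => (v, w))).card := by
            apply Finset.sum_le_sum
            intro v hv
            rw [Finset.card_image_of_injective _ (fun a b hab => by
              simpa using hab)]
            exact hCWcard i v hi him hv
    · intro a ha b hb hab
      rw [Function.onFun_apply, Finset.disjoint_left]
      intro p hp hq
      simp only [Finset.mem_image] at hp hq
      obtain ⟨w1, _, rfl⟩ := hp
      obtain ⟨w2, _, heq⟩ := hq
      exact hab (congrArg Prod.fst heq).symm
  -- growth
  have hL1 : d ≤ (L 1).card := le_trans (le_trans hK0 (hKcard_le 0 hm1)) le_rfl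
  have hB : ∀ k, k + 1 ≤ m → d * (d - 1) ^ k ≤ (L (k+1)).card := by
    intro k
    induction k with
    | zero => intro _; simpa using hL1
    | succ k ihk =>
        intro hk
        have h1 : d * (d-1)^(k+1) = (d-1) * (d * (d-1)^k) := by ring
        rw [h1]
        calc (d-1) * (d * (d-1)^k) ≤ (d-1) * (L (k+1)).card :=
              Nat.mul_le_mul_left _ (ihk (by omega))
          _ ≤ (K (k+1)).card := hKi (k+1) (by omega) hk
          _ ≤ (L (k+2)).card := hKcard_le (k+1) hk
  -- disjoint union
  have hdisj : ∀ k ∈ Finset.range (m+1), ∀ l ∈ Finset.range (m+1), k ≠ l →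
      Disjoint (L k) (L l) := by
    intro k _ l _ hkl
    rw [Finset.disjoint_left]
    intro v hvk hvl
    obtain ⟨_, _, h1⟩ := (hmemL k v).mp hvk
    obtain ⟨_, _, h2⟩ := (hmemL l v).mp hvl
    omega
  have hsum : ∑ k ∈ Finset.range (m+1), (L k).card ≤
      (Finset.univ.filter fun v => c v ≠ 0).card := by
    rw [← Finset.card_biUnion hdisj]
    apply Finset.card_le_card
    intro v hv
    simp only [Finset.mem_biUnion] at hv
    obtain ⟨k, _, hvk⟩ := hv
    obtain ⟨hcv, _, _⟩ := (hmemL k v).mp hvk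
    simp [hcv]
  have hL0card : 1 ≤ (L 0).card := Finset.card_pos.mpr ⟨v0, hL0mem⟩
  have hfin : 1 + ∑ k ∈ Finset.range m, d * (d-1)^k ≤
      ∑ k ∈ Finset.range (m+1), (L k).card := by
    rw [Finset.sum_range_succ']
    have h2 : ∑ k ∈ Finset.range m, d * (d-1)^k ≤
        ∑ k ∈ Finset.range m, (L (k+1)).card := by
      apply Finset.sum_le_sum
      intro k hk
      exact hB k (Finset.mem_range.mp hk)
    rw [add_comm]
    exact Nat.add_le_add h2 hL0card
  have hmm : (g - 6) / 4 + 1 = m := by omega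
  rw [hmm]
  exact le_trans hfin hsum
end

section
/- Support-propagation lemma in a tree of girth-constrained Tanner graph: let G be a bipartite graph with variable and check nodes, girth g, and let S ⊆ V (variable nodes) be a set such that every check node adjacent to a node of S has at least two neighbors in S. If S is nonempty and every variable node has degree at least d, then |S| ≥ 1 + d + d(d-1) + ... + d(d-1)^{(g-6)/4} when g ≡ 2 (mod 4) with g/2 odd. -/
open SimpleGraph

namespace Stmt9Aux

lemma isPath_concat {α : Type} {G : SimpleGraph α} {u x z : α} {p : G.Walk u x}
    (hp : p.IsPath) (h : G.Adj x z) (hz : z ∉ p.support) : (p.concat h).IsPath := by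
  rw [← Walk.isPath_reverse_iff, Walk.reverse_concat]
  exact hp.reverse.cons (by rwa [Walk.support_reverse, List.mem_reverse])

lemma dist_lt_of_mem_support {α : Type} [DecidableEq α] {G : SimpleGraph α} {u x x' : α}
    (p : G.Walk u x) (hx' : x' ∈ p.support) (hne : x' ≠ x) :
    G.dist u x' < p.length := by
  have h1 : G.dist u x' ≤ (p.takeUntil x' hx').length := dist_le _
  have h2 := congrArg Walk.length (p.take_spec hx')
  rw [Walk.length_append] at h2
  have h3 : (p.dropUntil x' hx').length ≠ 0 := fun h0 =>
    hne (Walk.eq_of_length_eq_zero h0)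
  omega

lemma dist_le_of_mem_support {α : Type} [DecidableEq α] {G : SimpleGraph α} {u x x' : α}
    (p : G.Walk u x) (hx' : x' ∈ p.support) :
    G.dist u x' ≤ p.length :=
  le_trans (dist_le (p.takeUntil x' hx')) (Walk.length_takeUntil_le p hx')

lemma exists_cycle_of_two_paths {α : Type} [DecidableEq α] {G : SimpleGraph α} {u v : α}
    (p q : G.Walk u v) (hp : p.IsPath) (hq : q.IsPath) (hne : p ≠ q) :
    ∃ (x : α) (c : G.Walk x x), c.IsCycle ∧ c.length ≤ p.length + q.length := by
  classical
  set s : Set (Sym2 α) := {e | e ∈ p.edges ∨ e ∈ q.edges} with hs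
  set H := SimpleGraph.fromEdgeSet s with hH
  have hHG : H ≤ G := by
    intro a b hab
    rw [hH, fromEdgeSet_adj] at hab
    rcases hab.1 with h | h
    · exact p.adj_of_mem_edges h
    · exact q.adj_of_mem_edges h
  have hpe : ∀ e ∈ p.edges, e ∈ H.edgeSet := by
    intro e he
    rw [hH, edgeSet_fromEdgeSet]
    exact ⟨Or.inl he, G.not_isDiag_of_mem_edgeSet (p.edges_subset_edgeSet he)⟩
  have hqe : ∀ e ∈ q.edges, e ∈ H.edgeSet := by
    intro e he
    rw [hH, edgeSet_fromEdgeSet]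
    exact ⟨Or.inr he, G.not_isDiag_of_mem_edgeSet (q.edges_subset_edgeSet he)⟩
  by_cases hac : H.IsAcyclic
  · exfalso
    have heq : (⟨p.transfer H hpe, hp.transfer hpe⟩ : H.Path u v) =
        ⟨q.transfer H hqe, hq.transfer hqe⟩ := hac.path_unique _ _
    have h2 : p.transfer H hpe = q.transfer H hqe := congrArg Subtype.val heq
    apply hne
    have h3 := congrArg (fun w : H.Walk u v => w.transfer G
      (fun e he => (edgeSet_mono hHG) (w.edges_subset_edgeSet he))) h2
    simpa only [Walk.transfer_transfer, Walk.transfer_self] using h3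
  · rw [SimpleGraph.IsAcyclic] at hac
    push_neg at hac
    obtain ⟨x, c, hc⟩ := hac
    refine ⟨x, c.mapLe hHG, hc.mapLe _, ?_⟩
    have hlen : (c.mapLe hHG).length = c.length := Walk.length_map _ _
    rw [hlen]
    have hnd : c.edges.Nodup := hc.isTrail.edges_nodup
    have hsub : c.edges.toFinset ⊆ p.edges.toFinset ∪ q.edges.toFinset := by
      intro e he
      rw [List.mem_toFinset] at he
      have := c.edges_subset_edgeSet he
      rw [hH, edgeSet_fromEdgeSet] at this
      rcases this.1 with h | h
      · exact Finset.mem_union_left _ (List.mem_toFinset.mpr h)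
      · exact Finset.mem_union_right _ (List.mem_toFinset.mpr h)
    calc c.length = c.edges.length := (Walk.length_edges c).symm
      _ = c.edges.toFinset.card := (List.toFinset_card_of_nodup hnd).symm
      _ ≤ (p.edges.toFinset ∪ q.edges.toFinset).card := Finset.card_le_card hsub
      _ ≤ p.edges.toFinset.card + q.edges.toFinset.card := Finset.card_union_le _ _
      _ ≤ p.edges.length + q.edges.length :=
          Nat.add_le_add (List.toFinset_card_le _) (List.toFinset_card_le _)
      _ = p.length + q.length := by rw [Walk.length_edges, Walk.length_edges]

lemma walk_parity {V W : Type} {G : SimpleGraph (V ⊕ W)}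
    (hbipV : ∀ v v' : V, ¬ G.Adj (Sum.inl v) (Sum.inl v'))
    (hbipW : ∀ w w' : W, ¬ G.Adj (Sum.inr w) (Sum.inr w'))
    {x y : V ⊕ W} (p : G.Walk x y) :
    (p.length + Sum.elim (fun _ => 0) (fun _ => 1) x
      + Sum.elim (fun _ => 0) (fun _ => 1) y) % 2 = 0 := by
  induction p with
  | nil => rename_i a; rcases a with a | a <;> simp
  | @cons a b c h' p' ih =>
    have hab : Sum.elim (fun _ => (0:ℕ)) (fun _ => 1) a
        + Sum.elim (fun _ => (0:ℕ)) (fun _ => 1) b = 1 := by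
      rcases a with a | a <;> rcases b with b | b
      · exact absurd h' (hbipV _ _)
      · simp
      · simp
      · exact absurd h' (hbipW _ _)
    simp only [Walk.length_cons]
    omega

end Stmt9Aux
theorem stmt9 {V W : Type} [Fintype V] [Fintype W] [DecidableEq V] [DecidableEq W]
    (G : SimpleGraph (V ⊕ W)) [DecidableRel G.Adj]
    (hbipV : ∀ v v' : V, ¬ G.Adj (Sum.inl v) (Sum.inl v'))
    (hbipW : ∀ w w' : W, ¬ G.Adj (Sum.inr w) (Sum.inr w'))
    (d g : ℕ) (hgirth : G.girth = (g : ℕ∞)) (hg : g % 4 = 2)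
    (hdeg : ∀ v : V, d ≤ G.degree (Sum.inl v))
    (S : Finset V) (hS : S.Nonempty)
    (hcheck : ∀ w : W, (∃ v ∈ S, G.Adj (Sum.inl v) (Sum.inr w)) →
      2 ≤ (S.filter fun v => G.Adj (Sum.inl v) (Sum.inr w)).card) :
    1 + ∑ k ∈ Finset.range ((g - 6) / 4 + 1), d * (d - 1) ^ k ≤ S.card := by
  classical
  obtain ⟨v0, hv0S⟩ := hS
  -- numeric girth facts
  have hgnat : G.girth = g := by exact_mod_cast hgirth
  have hgne : g ≠ 0 := by omega
  have hnac : ¬ G.IsAcyclic := fun h => hgne (hgnat ▸ h.girth_eq_zero)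
  have hg3 : 3 ≤ g := hgnat ▸ three_le_girth hnac
  have hg6 : 6 ≤ g := by omega
  set m := (g - 6) / 4 with hm
  have hgm : g = 4 * m + 6 := by omega
  have hegirth : G.egirth = (g : ℕ∞) := by
    have h1 : G.egirth ≠ ⊤ := fun h => hnac (egirth_eq_top.mp h)
    rw [← hgnat, SimpleGraph.girth]
    exact (ENat.coe_toNat h1).symm
  have hcyc : ∀ {a : V ⊕ W} (c : G.Walk a a), c.IsCycle → g ≤ c.length := by
    intro a c hc
    have h1 := (le_egirth.mp le_rfl) a c hc
    rw [hegirth] at h1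
    exact_mod_cast h1
  have key : ∀ {x y : V ⊕ W} (p q : G.Walk x y), p.IsPath → q.IsPath → p ≠ q →
      g ≤ p.length + q.length := by
    intro x y p q hp hq hne
    obtain ⟨a, c, hc, hlen⟩ := Stmt9Aux.exists_cycle_of_two_paths p q hp hq hne
    exact le_trans (hcyc c hc) hlen
  set r : V ⊕ W := Sum.inl v0 with hr
  -- parity of distances
  have hdistV : ∀ v : V, G.Reachable r (Sum.inl v) → G.dist r (Sum.inl v) % 2 = 0 := by
    intro v hrv
    obtain ⟨p, hp, hl⟩ := hrv.exists_path_of_dist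
    have := Stmt9Aux.walk_parity hbipV hbipW p
    simp only [hr, Sum.elim_inl] at this
    omega
  have hdistW : ∀ w : W, G.Reachable r (Sum.inr w) → G.dist r (Sum.inr w) % 2 = 1 := by
    intro w hrw
    obtain ⟨p, hp, hl⟩ := hrw.exists_path_of_dist
    have := Stmt9Aux.walk_parity hbipV hbipW p
    simp only [hr, Sum.elim_inl, Sum.elim_inr] at this
    omega
  -- separation workhorse
  have sep : ∀ {x y z : V ⊕ W}, x ≠ y → G.Adj x z → G.Adj y z →
      G.Reachable r x → G.Reachable r y → G.dist r x = G.dist r y →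
      G.dist r x < G.dist r z → g ≤ 2 * G.dist r x + 2 := by
    intro x y z hxy hax hay hrx hry hL hz
    obtain ⟨px, hpx, hlx⟩ := hrx.exists_path_of_dist
    obtain ⟨py, hpy, hly⟩ := hry.exists_path_of_dist
    have hzx : z ∉ px.support := fun hmem => by
      have := Stmt9Aux.dist_le_of_mem_support px hmem
      omega
    have hzy : z ∉ py.support := fun hmem => by
      have := Stmt9Aux.dist_le_of_mem_support py hmem
      omega
    have hPx := Stmt9Aux.isPath_concat hpx hax hzx
    have hPy := Stmt9Aux.isPath_concat hpy hay hzy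
    have hne : px.concat hax ≠ py.concat hay := by
      intro hEq
      have hsup := congrArg SimpleGraph.Walk.support hEq
      rw [Walk.support_concat, Walk.support_concat] at hsup
      have hsup2 : px.support = py.support := by
        simpa only [List.concat_eq_append, List.append_cancel_right_eq] using hsup
      have hx : x ∈ py.support := hsup2 ▸ px.end_mem_support
      have := Stmt9Aux.dist_lt_of_mem_support py hx hxy
      omega
    have hkey := key _ _ hPx hPy hne
    rw [Walk.length_concat, Walk.length_concat] at hkey
    omega
  -- level sets
  set T : ℕ → Finset V := fun k => S.filter fun v =>
    G.Reachable r (Sum.inl v) ∧ G.dist r (Sum.inl v) = 2 * k with hT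
  have hmemT : ∀ {k : ℕ} {v : V}, v ∈ T k ↔
      v ∈ S ∧ G.Reachable r (Sum.inl v) ∧ G.dist r (Sum.inl v) = 2 * k := by
    intro k v
    rw [hT, Finset.mem_filter]
  have hT0 : T 0 = {v0} := by
    ext v
    rw [hmemT, Finset.mem_singleton]
    constructor
    · rintro ⟨-, hrv, hd⟩
      obtain ⟨p, hp, hl⟩ := hrv.exists_path_of_dist
      have h0 : r = Sum.inl v := Walk.eq_of_length_eq_zero (p := p) (by omega)
      rw [hr] at h0
      exact (Sum.inl_injective h0).symm
    · rintro rfl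
      exact ⟨hv0S, Reachable.refl _, by rw [hr]; simp [SimpleGraph.dist_self]⟩
  -- neighbor sets
  set A : ℕ → V → Finset W := fun k v => Finset.univ.filter fun w =>
    G.Adj (Sum.inl v) (Sum.inr w) ∧ G.dist r (Sum.inr w) = 2 * k + 1 with hA
  have hmemA : ∀ {k : ℕ} {v : V} {w : W}, w ∈ A k v ↔
      G.Adj (Sum.inl v) (Sum.inr w) ∧ G.dist r (Sum.inr w) = 2 * k + 1 := by
    intro k v w
    rw [hA, Finset.mem_filter]
    simp
  -- cardinality of A
  have hAcard : ∀ k ≤ m, ∀ v ∈ T k,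
      d - 1 ≤ (A k v).card ∧ (k = 0 → d ≤ (A k v).card) := by
    intro k hk v hv
    rw [hmemT] at hv
    obtain ⟨hvS, hrv, hdv⟩ := hv
    set N : Finset W := Finset.univ.filter fun w => G.Adj (Sum.inl v) (Sum.inr w) with hN
    have hmemN : ∀ {w : W}, w ∈ N ↔ G.Adj (Sum.inl v) (Sum.inr w) := by
      intro w; rw [hN, Finset.mem_filter]; simp
    have hNcard : d ≤ N.card := by
      have himg : G.neighborFinset (Sum.inl v) = N.image Sum.inr := by
        ext u
        rcases u with u | w
        · simp only [mem_neighborFinset, Finset.mem_image]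
          constructor
          · intro h; exact absurd h (hbipV _ _)
          · rintro ⟨w, -, h⟩; exact absurd h (by simp)
        · simp only [mem_neighborFinset, Finset.mem_image]
          constructor
          · intro h; exact ⟨w, hmemN.mpr h, rfl⟩
          · rintro ⟨w', hw', h⟩
            rw [Sum.inr_injective h] at hw'
            exact hmemN.mp hw'
      have := hdeg v
      rw [← card_neighborFinset_eq_degree, himg,
        Finset.card_image_of_injective _ Sum.inr_injective] at this
      exact this
    -- dichotomy
    have hdich : ∀ w ∈ N, G.dist r (Sum.inr w) = 2 * k + 1 ∨
        (1 ≤ k ∧ G.dist r (Sum.inr w) + 1 = 2 * k) := by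
      intro w hw
      have hadj := hmemN.mp hw
      have hrw : G.Reachable r (Sum.inr w) := hrv.trans hadj.reachable
      obtain ⟨p, hp, hl⟩ := hrv.exists_path_of_dist
      obtain ⟨q, hq, hlq⟩ := hrw.exists_path_of_dist
      have hub : G.dist r (Sum.inr w) ≤ 2 * k + 1 := by
        have := dist_le (p.concat hadj)
        rw [Walk.length_concat] at this
        omega
      have hlb : G.dist r (Sum.inl v) ≤ G.dist r (Sum.inr w) + 1 := by
        have := dist_le (q.concat hadj.symm)
        rw [Walk.length_concat] at this
        omega
      have hpar := hdistW w hrw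
      omega
    set B : Finset W := N.filter fun w => ¬ (G.dist r (Sum.inr w) = 2 * k + 1) with hB
    have hBcard : B.card ≤ 1 := by
      rw [Finset.card_le_one]
      intro w1 hw1 w2 hw2
      by_contra hne12
      rw [hB, Finset.mem_filter] at hw1 hw2
      have hd1 := hdich w1 hw1.1
      have hd2 := hdich w2 hw2.1
      have hk1 : 1 ≤ k := by tauto
      have he1 : G.dist r (Sum.inr w1) = 2 * k - 1 := by omega
      have he2 : G.dist r (Sum.inr w2) = 2 * k - 1 := by omega
      have hadj1 := hmemN.mp hw1.1
      have hadj2 := hmemN.mp hw2.1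
      have hrw1 : G.Reachable r (Sum.inr w1) := hrv.trans hadj1.reachable
      have hrw2 : G.Reachable r (Sum.inr w2) := hrv.trans hadj2.reachable
      have hs := sep (x := Sum.inr w1) (y := Sum.inr w2) (z := Sum.inl v)
        (fun h => hne12 (Sum.inr_injective h)) hadj1.symm hadj2.symm hrw1 hrw2
        (by omega) (by omega)
      omega
    have hsplit : (A k v).card + B.card = N.card := by
      have : A k v = N.filter fun w => G.dist r (Sum.inr w) = 2 * k + 1 := by
        ext w
        rw [hmemA, Finset.mem_filter, hmemN]
      rw [this, hB]
      exact Finset.card_filter_add_card_filter_not _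
    constructor
    · omega
    · intro hk0
      have hBempty : B.card = 0 := by
        rw [Finset.card_eq_zero, hB, Finset.filter_eq_empty_iff]
        intro w hw
        have := hdich w hw
        omega
      omega
  -- the picking function
  have hpickex : ∀ v ∈ S, ∀ w : W, G.Adj (Sum.inl v) (Sum.inr w) →
      ∃ v', v' ∈ S ∧ v' ≠ v ∧ G.Adj (Sum.inl v') (Sum.inr w) := by
    intro v hv w hadj
    have h2 := hcheck w ⟨v, hv, hadj⟩
    obtain ⟨v', hv', hne⟩ := Finset.exists_mem_ne
      (s := S.filter fun v => G.Adj (Sum.inl v) (Sum.inr w)) (by omega) v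
    rw [Finset.mem_filter] at hv'
    exact ⟨v', hv'.1, hne, hv'.2⟩
  set pick : V → W → V := fun v w =>
    if h : ∃ v', v' ∈ S ∧ v' ≠ v ∧ G.Adj (Sum.inl v') (Sum.inr w) then h.choose else v0
    with hpickdef
  have hpick : ∀ v ∈ S, ∀ w : W, G.Adj (Sum.inl v) (Sum.inr w) →
      pick v w ∈ S ∧ pick v w ≠ v ∧ G.Adj (Sum.inl (pick v w)) (Sum.inr w) := by
    intro v hv w hadj
    have hex := hpickex v hv w hadj
    rw [hpickdef]
    simp only [dif_pos hex]
    exact ⟨hex.choose_spec.1, hex.choose_spec.2.1, hex.choose_spec.2.2⟩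
  -- pick lands in next level
  have hpickT : ∀ k ≤ m, ∀ v ∈ T k, ∀ w ∈ A k v, pick v w ∈ T (k + 1) := by
    intro k hk v hv w hw
    have hv' := hmemT.mp hv
    obtain ⟨hvS, hrv, hdv⟩ := hv'
    obtain ⟨hadj, hdw⟩ := hmemA.mp hw
    obtain ⟨hS', hne', hadj'⟩ := hpick v hvS w hadj
    have hrw : G.Reachable r (Sum.inr w) := hrv.trans hadj.reachable
    have hr' : G.Reachable r (Sum.inl (pick v w)) := hrw.trans hadj'.symm.reachable
    obtain ⟨q, hq, hlq⟩ := hrw.exists_path_of_dist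
    obtain ⟨q', hq', hlq'⟩ := hr'.exists_path_of_dist
    have hub : G.dist r (Sum.inl (pick v w)) ≤ 2 * k + 2 := by
      have := dist_le (q.concat hadj'.symm)
      rw [Walk.length_concat] at this
      omega
    have hlb : G.dist r (Sum.inr w) ≤ G.dist r (Sum.inl (pick v w)) + 1 := by
      have := dist_le (q'.concat hadj')
      rw [Walk.length_concat] at this
      omega
    have hpar := hdistV _ hr'
    have hD : G.dist r (Sum.inl (pick v w)) = 2 * k ∨
        G.dist r (Sum.inl (pick v w)) = 2 * k + 2 := by omega
    rcases hD with hD | hD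
    · exfalso
      have hs := sep (x := Sum.inl v) (y := Sum.inl (pick v w)) (z := Sum.inr w)
        (fun h => hne' (Sum.inl_injective h).symm) hadj hadj' hrv hr'
        (by omega) (by omega)
      omega
    · exact hmemT.mpr ⟨hS', hr', by omega⟩
  -- injectivity
  have hstep2 : ∀ k ≤ m, ((T k).sigma fun v => A k v).card ≤ (T (k + 1)).card := by
    intro k hk
    apply Finset.card_le_card_of_injOn (fun p => pick p.1 p.2)
    · intro p hp
      rw [Finset.mem_coe, Finset.mem_sigma] at hp
      exact hpickT k hk p.1 hp.1 p.2 hp.2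
    · intro p hp p' hp' hEq
      simp only [Finset.coe_sigma, Set.mem_sigma_iff] at hp hp'
      obtain ⟨hp1, hp2⟩ := hp
      obtain ⟨hp1', hp2'⟩ := hp'
      obtain ⟨v, w⟩ := p
      obtain ⟨v', w'⟩ := p'
      simp only at hp1 hp2 hp1' hp2' hEq ⊢
      -- facts
      obtain ⟨hvS, hrv, hdv⟩ := hmemT.mp hp1
      obtain ⟨hvS', hrv', hdv'⟩ := hmemT.mp hp1'
      obtain ⟨hadj, hdw⟩ := hmemA.mp hp2
      obtain ⟨hadj', hdw'⟩ := hmemA.mp hp2'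
      obtain ⟨hpS, hpne, hpadj⟩ := hpick v hvS w hadj
      obtain ⟨hpS', hpne', hpadj'⟩ := hpick v' hvS' w' hadj'
      by_cases hww : w = w'
      · subst hww
        by_cases hvv : v = v'
        · subst hvv; rfl
        · exfalso
          have hrw : G.Reachable r (Sum.inr w) := hrv.trans hadj.reachable
          have hs := sep (x := Sum.inl v) (y := Sum.inl v') (z := Sum.inr w)
            (fun h => hvv (Sum.inl_injective h)) hadj hadj' hrv hrv'
            (by omega) (by omega)
          omega
      · exfalso
        have hTnext := hpickT k hk v hp1 w hp2
        obtain ⟨-, hrx', hdx'⟩ := hmemT.mp hTnext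
        have hrw : G.Reachable r (Sum.inr w) := hrv.trans hadj.reachable
        have hrw' : G.Reachable r (Sum.inr w') := hrv'.trans hadj'.reachable
        have hpadj2 : G.Adj (Sum.inl (pick v w)) (Sum.inr w') := hEq ▸ hpadj'
        have hs := sep (x := Sum.inr w) (y := Sum.inr w') (z := Sum.inl (pick v w))
          (fun h => hww (Sum.inr_injective h)) hpadj.symm hpadj2.symm hrw hrw'
          (by omega) (by omega)
        omega
  -- level cardinalities
  have hT1 : d ≤ (T 1).card := by
    have h1 := hstep2 0 (Nat.zero_le m)
    rw [Finset.card_sigma, hT0, Finset.sum_singleton] at h1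
    norm_num at h1
    have hv0T : v0 ∈ T 0 := by rw [hT0]; exact Finset.mem_singleton_self v0
    have hA0 := (hAcard 0 (Nat.zero_le m) v0 hv0T).2 rfl
    omega
  have hTk : ∀ k ≤ m, d * (d - 1) ^ k ≤ (T (k + 1)).card := by
    intro k
    induction k with
    | zero => intro _; simpa using hT1
    | succ n ih =>
      intro hk
      have h1 := hstep2 (n + 1) hk
      rw [Finset.card_sigma] at h1
      have h3 : (d - 1) * (T (n + 1)).card ≤ ∑ v ∈ T (n + 1), (A (n + 1) v).card := by
        calc (d - 1) * (T (n + 1)).card = ∑ _v ∈ T (n + 1), (d - 1) := by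
              rw [Finset.sum_const, smul_eq_mul, mul_comm]
          _ ≤ _ := Finset.sum_le_sum fun v hv => (hAcard (n + 1) hk v hv).1
      have h4 := ih (by omega)
      calc d * (d - 1) ^ (n + 1) = (d - 1) * (d * (d - 1) ^ n) := by ring
        _ ≤ (d - 1) * (T (n + 1)).card := Nat.mul_le_mul_left _ h4
        _ ≤ (T (n + 2)).card := le_trans h3 h1
  -- sum over disjoint levels
  have hsum : ∑ k ∈ Finset.range (m + 2), (T k).card ≤ S.card := by
    rw [← Finset.card_biUnion]
    · apply Finset.card_le_card
      intro v hv
      rw [Finset.mem_biUnion] at hv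
      obtain ⟨k, -, hk⟩ := hv
      exact (hmemT.mp hk).1
    · intro i _ j _ hij
      rw [Function.onFun, Finset.disjoint_left]
      intro v hvi hvj
      have h1 := (hmemT.mp hvi).2.2
      have h2 := (hmemT.mp hvj).2.2
      omega
  have hfinal : 1 + ∑ k ∈ Finset.range (m + 1), d * (d - 1) ^ k ≤
      ∑ k ∈ Finset.range (m + 2), (T k).card := by
    conv_rhs => rw [Finset.sum_range_succ']
    have h0 : (T 0).card = 1 := by rw [hT0]; exact Finset.card_singleton v0
    rw [h0]
    have h1 : ∑ k ∈ Finset.range (m + 1), d * (d - 1) ^ k ≤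
        ∑ k ∈ Finset.range (m + 1), (T (k + 1)).card :=
      Finset.sum_le_sum fun k hk => hTk k (by rw [Finset.mem_range] at hk; omega)
    omega
  omega
end
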